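/- arXiv:1506.07615 — 3 statements merged into one kernel-verified Lean document; each statement's English description precedes it below -/
import Mathlib

section
/- The unique minimizer of ‖Z‖_* subject to L = LZ is Z* = V_L V_L^T, where L = U_L Σ_L V_L^T is the skinny SVD of L. -/
/-- Nuclear norm: sum of square roots of the eigenvalues of AᵀA. -/
noncomputable def nuclearNorm {m n : ℕ} (A : Matrix (Fin m) (Fin n) ℝ) : ℝ :=
  ∑ i, Real.sqrt ((Matrix.isHermitian_conjTranspose_mul_self A).eigenvalues i)

open Matrix

private lemma dot_self_nonneg {n : ℕ} (x : Fin n → ℝ) : 0 ≤ x ⬝ᵥ x :=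
  Finset.sum_nonneg fun i _ => mul_self_nonneg _

private lemma dot_cs {n : ℕ} (x y : Fin n → ℝ) :
    x ⬝ᵥ y ≤ Real.sqrt (x ⬝ᵥ x) * Real.sqrt (y ⬝ᵥ y) := by
  have h := Finset.sum_mul_sq_le_sq_mul_sq Finset.univ x y
  have h1 : x ⬝ᵥ y ≤ |x ⬝ᵥ y| := le_abs_self _
  have h2 : |x ⬝ᵥ y| = Real.sqrt ((x ⬝ᵥ y) ^ 2) := (Real.sqrt_sq_eq_abs _).symm
  have h3 : Real.sqrt ((x ⬝ᵥ y) ^ 2) ≤ Real.sqrt ((x ⬝ᵥ x) * (y ⬝ᵥ y)) := by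
    apply Real.sqrt_le_sqrt
    simpa [dotProduct, pow_two, Finset.sum_mul, Finset.mul_sum, mul_assoc] using h
  calc x ⬝ᵥ y ≤ Real.sqrt ((x ⬝ᵥ y) ^ 2) := h2 ▸ h1
    _ ≤ Real.sqrt ((x ⬝ᵥ x) * (y ⬝ᵥ y)) := h3
    _ = Real.sqrt (x ⬝ᵥ x) * Real.sqrt (y ⬝ᵥ y) := Real.sqrt_mul (dot_self_nonneg x) _

private lemma col_quad {n : ℕ} (S A : Matrix (Fin n) (Fin n) ℝ) (i : Fin n) :
    (Sᵀ * A * S) i i = (fun j => S j i) ⬝ᵥ (A *ᵥ fun j => S j i) := by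
  simp [Matrix.mul_apply, Matrix.mulVec, dotProduct, Finset.mul_sum,
    Finset.sum_mul, mul_assoc]
  rw [Finset.sum_comm]

private lemma dvA {n : ℕ} (A : Matrix (Fin n) (Fin n) ℝ) (u w : Fin n → ℝ) :
    u ⬝ᵥ (Aᵀ *ᵥ w) = (A *ᵥ u) ⬝ᵥ w := by
  rw [Matrix.dotProduct_mulVec, Matrix.vecMul_transpose]

private lemma trace_conj {n : ℕ} (S A : Matrix (Fin n) (Fin n) ℝ) (h : S * Sᵀ = 1) :
    (Sᵀ * A * S).trace = A.trace := by
  rw [Matrix.trace_mul_cycle, h, Matrix.one_mul]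

/-- Key inequality: if `P` is a symmetric idempotent with `P * Z = P` then
`trace P ≤ ‖Z‖_*`, with equality only if `Z = P`. -/
private lemma key {n : ℕ} (P Z : Matrix (Fin n) (Fin n) ℝ)
    (hPt : Pᵀ = P) (hPP : P * P = P) (hPZ : P * Z = P) :
    P.trace ≤ nuclearNorm Z ∧ (P.trace = nuclearNorm Z → Z = P) := by
  classical
  have hM : (Zᵀ * Z).IsHermitian := Matrix.isHermitian_conjTranspose_mul_self Z
  set S : Matrix (Fin n) (Fin n) ℝ := (hM.eigenvectorUnitary : Matrix (Fin n) (Fin n) ℝ) with hSdef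
  set lam : Fin n → ℝ := hM.eigenvalues with hlamdef
  have hstar : star S = Sᵀ := by ext i j; simp [Matrix.star_apply]
  have hS1 : S * Sᵀ = 1 := by
    have := Matrix.mem_unitaryGroup_iff.mp hM.eigenvectorUnitary.2
    rwa [hstar] at this
  have hS2 : Sᵀ * S = 1 := by
    have := Matrix.mem_unitaryGroup_iff'.mp hM.eigenvectorUnitary.2
    rwa [hstar] at this
  have hdiag : Sᵀ * (Zᵀ * Z) * S = Matrix.diagonal lam := by
    have := hM.conjStarAlgAut_star_eigenvectorUnitary
    rwa [Unitary.conjStarAlgAut_apply, Unitary.coe_star, star_star, hstar, RCLike.ofReal_real_eq_id, Function.id_comp] at this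
  have hlam0 : ∀ i, 0 ≤ lam i := fun i =>
    (Matrix.posSemidef_conjTranspose_mul_self Z).eigenvalues_nonneg i
  -- the columns of S
  set v : Fin n → Fin n → ℝ := fun i j => S j i with hvdef
  set a : Fin n → ℝ := fun i => (Sᵀ * (P * Z) * S) i i with hadef
  have hvv : ∀ i, v i ⬝ᵥ v i = 1 := by
    intro i
    have h0 := col_quad S 1 i
    rw [Matrix.mul_one, hS2] at h0
    simpa using h0.symm
  -- w i := Z *ᵥ v i ; x i := P *ᵥ v i
  have hww : ∀ i, (Z *ᵥ v i) ⬝ᵥ (Z *ᵥ v i) = lam i := by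
    intro i
    have h0 := col_quad S (Zᵀ * Z) i
    rw [hdiag] at h0
    have h1 : v i ⬝ᵥ ((Zᵀ * Z) *ᵥ v i) = (Z *ᵥ v i) ⬝ᵥ (Z *ᵥ v i) := by
      rw [← Matrix.mulVec_mulVec, dvA]
    simp only [Matrix.diagonal_apply_eq] at h0
    rw [← h1, ← h0]
  have hxx : ∀ i, (P *ᵥ v i) ⬝ᵥ (P *ᵥ v i) = v i ⬝ᵥ (P *ᵥ v i) := by
    intro i
    conv_lhs => rw [← hPt]
    rw [dvA, hPt, Matrix.mulVec_mulVec, hPP, dotProduct_comm]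
  have hxx_le : ∀ i, (P *ᵥ v i) ⬝ᵥ (P *ᵥ v i) ≤ 1 := by
    intro i
    have hnn := dot_self_nonneg (v i - P *ᵥ v i)
    have hexp : (v i - P *ᵥ v i) ⬝ᵥ (v i - P *ᵥ v i)
        = v i ⬝ᵥ v i - (P *ᵥ v i) ⬝ᵥ (P *ᵥ v i) := by
      rw [sub_dotProduct, dotProduct_sub, dotProduct_sub]
      rw [hxx i, dotProduct_comm (P *ᵥ v i) (v i)]
      ring
    rw [hexp, hvv i] at hnn
    linarith
  have ha_eq : ∀ i, a i = (P *ᵥ v i) ⬝ᵥ (Z *ᵥ v i) := by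
    intro i
    have e1 : v i ⬝ᵥ (P *ᵥ (Z *ᵥ v i)) = (P *ᵥ v i) ⬝ᵥ (Z *ᵥ v i) := by
      conv_lhs => rw [← hPt]
      exact dvA P (v i) (Z *ᵥ v i)
    show (Sᵀ * (P * Z) * S) i i = _
    rw [col_quad, ← Matrix.mulVec_mulVec]
    exact e1
  have ha_le : ∀ i, a i ≤ Real.sqrt (lam i) := by
    intro i
    rw [ha_eq i]
    calc (P *ᵥ v i) ⬝ᵥ (Z *ᵥ v i)
        ≤ Real.sqrt ((P *ᵥ v i) ⬝ᵥ (P *ᵥ v i)) * Real.sqrt ((Z *ᵥ v i) ⬝ᵥ (Z *ᵥ v i)) :=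
          dot_cs _ _
      _ ≤ 1 * Real.sqrt (lam i) := by
          rw [hww i]
          apply mul_le_mul_of_nonneg_right _ (Real.sqrt_nonneg _)
          calc Real.sqrt ((P *ᵥ v i) ⬝ᵥ (P *ᵥ v i)) ≤ Real.sqrt 1 :=
                Real.sqrt_le_sqrt (hxx_le i)
            _ = 1 := Real.sqrt_one
      _ = Real.sqrt (lam i) := one_mul _
  have htr : P.trace = ∑ i, a i := by
    have h1 : P.trace = (P * Z).trace := by rw [hPZ]
    rw [h1, ← trace_conj S (P * Z) hS1]
    rfl
  have hnn : nuclearNorm Z = ∑ i, Real.sqrt (lam i) := rfl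
  constructor
  · rw [htr, hnn]
    exact Finset.sum_le_sum fun i _ => ha_le i
  · intro heq
    -- equality forces each a i = sqrt (lam i)
    have hall : ∀ i, a i = Real.sqrt (lam i) := by
      by_contra hcon
      push_neg at hcon
      obtain ⟨i0, hi0⟩ := hcon
      have hlt : ∑ i, a i < ∑ i, Real.sqrt (lam i) :=
        Finset.sum_lt_sum (fun i _ => ha_le i) ⟨i0, Finset.mem_univ _, lt_of_le_of_ne (ha_le i0) hi0⟩
      rw [← htr, ← hnn] at hlt
      exact absurd heq (ne_of_lt hlt)
    -- deduce Z *ᵥ v i = P *ᵥ v i for each i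
    have hcols : ∀ i, Z *ᵥ v i = P *ᵥ v i := by
      intro i
      set x := P *ᵥ v i with hxdef
      set w := Z *ᵥ v i with hwdef
      have hPw : P *ᵥ w = x := by
        rw [hwdef, Matrix.mulVec_mulVec, hPZ]
      -- x ⬝ᵥ x = x ⬝ᵥ w
      have h1 : x ⬝ᵥ x = x ⬝ᵥ w := by
        conv_lhs => rw [← hPw]
        rw [← hPt, dvA, hPt, Matrix.mulVec_mulVec, hPP, dotProduct_comm,
          hPw, dotProduct_comm]
      have h2 : x ⬝ᵥ w = Real.sqrt (lam i) := by rw [← ha_eq i]; exact hall i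
      have h3 : w ⬝ᵥ w = lam i := hww i
      have h4 : x ⬝ᵥ x ≤ 1 := hxx_le i
      have h5 : Real.sqrt (lam i) ≤ 1 := by rw [← h2, ← h1]; exact h4
      have h6 : lam i ≤ 1 := by
        nlinarith [Real.sq_sqrt (hlam0 i), Real.sqrt_nonneg (lam i)]
      have h7 : lam i ≤ Real.sqrt (lam i) := by
        nlinarith [Real.sq_sqrt (hlam0 i), Real.sqrt_nonneg (lam i)]
      have hexp : (w - x) ⬝ᵥ (w - x) = w ⬝ᵥ w - 2 * (x ⬝ᵥ w) + x ⬝ᵥ x := by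
        rw [sub_dotProduct, dotProduct_sub, dotProduct_sub,
          dotProduct_comm w x]
        ring
      have hle0 : (w - x) ⬝ᵥ (w - x) ≤ 0 := by
        rw [hexp, h3, h2, h1, h2]
        linarith
      have hzero : (w - x) = 0 :=
        dotProduct_self_eq_zero.mp (le_antisymm hle0 (dot_self_nonneg _))
      exact sub_eq_zero.mp hzero
    have hZS : Z * S = P * S := by
      ext j i
      have := congrFun (hcols i) j
      simpa [Matrix.mul_apply, Matrix.mulVec, dotProduct, hvdef] using this
    calc Z = Z * (S * Sᵀ) := by rw [hS1, Matrix.mul_one]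
      _ = (Z * S) * Sᵀ := by rw [Matrix.mul_assoc]
      _ = (P * S) * Sᵀ := by rw [hZS]
      _ = P * (S * Sᵀ) := by rw [Matrix.mul_assoc]
      _ = P := by rw [hS1, Matrix.mul_one]

/-- The unique minimizer of ‖Z‖_* subject to L = LZ is Z* = V_L V_Lᵀ, where
L = U_L Σ_L V_Lᵀ is the skinny SVD of L; moreover ‖V_L V_Lᵀ‖_* = rank(L). -/
theorem stmt2 {m n r : ℕ} (L : Matrix (Fin m) (Fin n) ℝ)
    (U : Matrix (Fin m) (Fin r) ℝ) (σ : Fin r → ℝ) (V : Matrix (Fin n) (Fin r) ℝ)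
    (hL : L ≠ 0)
    (hSVD : L = U * Matrix.diagonal σ * V.transpose)
    (hσ : ∀ i, 0 < σ i)
    (hU : U.transpose * U = 1) (hV : V.transpose * V = 1) :
    L * (V * V.transpose) = L ∧
    nuclearNorm (V * V.transpose) = (L.rank : ℝ) ∧
    ∀ Z : Matrix (Fin n) (Fin n) ℝ, L * Z = L → Z ≠ V * V.transpose →
      nuclearNorm (V * V.transpose) < nuclearNorm Z := by
  classical
  set P := V * Vᵀ with hPdef
  have hPt : Pᵀ = P := by rw [hPdef, Matrix.transpose_mul, Matrix.transpose_transpose]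
  have hPP : P * P = P := by
    rw [hPdef, Matrix.mul_assoc, ← Matrix.mul_assoc Vᵀ, hV, Matrix.one_mul]
  have hLP : L * P = L := by
    rw [hSVD, hPdef, Matrix.mul_assoc, ← Matrix.mul_assoc Vᵀ, hV, Matrix.one_mul]
  have htr : P.trace = (r : ℝ) := by
    rw [hPdef, Matrix.trace_mul_comm, hV, Matrix.trace_one]
    simp
  -- rank L = r
  have hrank : L.rank = r := by
    have hle : L.rank ≤ r := by
      calc L.rank = (U * (Matrix.diagonal σ * Vᵀ)).rank := by rw [← Matrix.mul_assoc, ← hSVD]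
        _ ≤ U.rank := Matrix.rank_mul_le_left _ _
        _ ≤ Fintype.card (Fin r) := Matrix.rank_le_card_width U
        _ = r := Fintype.card_fin r
    have hD : Uᵀ * L * V = Matrix.diagonal σ := by
      rw [hSVD]
      simp only [Matrix.mul_assoc]
      rw [hV, Matrix.mul_one, ← Matrix.mul_assoc, hU, Matrix.one_mul]
    have hDrank : (Matrix.diagonal σ).rank = r := by
      rw [Matrix.rank_diagonal]
      have : ∀ i : Fin r, σ i ≠ 0 := fun i => ne_of_gt (hσ i)
      calc Fintype.card {i // σ i ≠ 0} = Fintype.card (Fin r) :=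
            Fintype.card_congr (Equiv.subtypeUnivEquiv this)
        _ = r := Fintype.card_fin r
    have hge : r ≤ L.rank := by
      calc r = (Matrix.diagonal σ).rank := hDrank.symm
        _ = (Uᵀ * (L * V)).rank := by rw [← Matrix.mul_assoc, hD]
        _ ≤ (L * V).rank := Matrix.rank_mul_le_right _ _
        _ ≤ L.rank := Matrix.rank_mul_le_left _ _
    omega
  -- nuclearNorm P = trace P
  have hnnP : nuclearNorm P = P.trace := by
    have hN : (Pᵀ * P).IsHermitian := Matrix.isHermitian_conjTranspose_mul_self P
    set T : Matrix (Fin n) (Fin n) ℝ := (hN.eigenvectorUnitary : Matrix (Fin n) (Fin n) ℝ) with hTdef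
    set mu : Fin n → ℝ := hN.eigenvalues with hmudef
    have hstar : star T = Tᵀ := by ext i j; simp [Matrix.star_apply]
    have hT1 : T * Tᵀ = 1 := by
      have := Matrix.mem_unitaryGroup_iff.mp hN.eigenvectorUnitary.2
      rwa [hstar] at this
    have hdiag : Tᵀ * (Pᵀ * P) * T = Matrix.diagonal mu := by
      have := hN.conjStarAlgAut_star_eigenvectorUnitary
      rwa [Unitary.conjStarAlgAut_apply, Unitary.coe_star, star_star, hstar, RCLike.ofReal_real_eq_id, Function.id_comp] at this
    have hPtP : Pᵀ * P = P := by rw [hPt, hPP]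
    have hidem : ∀ i, mu i * mu i = mu i := by
      intro i
      have hsq : Matrix.diagonal mu * Matrix.diagonal mu = Matrix.diagonal mu := by
        rw [← hdiag]
        calc Tᵀ * (Pᵀ * P) * T * (Tᵀ * (Pᵀ * P) * T)
            = Tᵀ * (Pᵀ * P) * (T * Tᵀ) * (Pᵀ * P) * T := by
              simp only [Matrix.mul_assoc]
          _ = Tᵀ * ((Pᵀ * P) * (Pᵀ * P)) * T := by
              rw [hT1]; simp only [Matrix.mul_one, Matrix.mul_assoc]
          _ = Tᵀ * (Pᵀ * P) * T := by rw [hPtP, hPP, ← hPtP]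
      have := congrFun (congrFun hsq i) i
      simpa [Matrix.diagonal_mul_diagonal] using this
    have hsqrt : ∀ i, Real.sqrt (mu i) = mu i := by
      intro i
      have h01 : mu i = 0 ∨ mu i = 1 := by
        have hf : mu i * (mu i - 1) = 0 := by nlinarith [hidem i]
        rcases mul_eq_zero.mp hf with h | h
        · left; exact h
        · right; linarith
      rcases h01 with h | h <;> simp [h]
    have hsum : ∑ i, mu i = P.trace := by
      have h1 : (Matrix.diagonal mu).trace = (Pᵀ * P).trace := by
        rw [← hdiag]; exact trace_conj T (Pᵀ * P) hT1
      have h2 : (Matrix.diagonal mu).trace = ∑ i, mu i := by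
        simp [Matrix.trace, Matrix.diag]
      rw [← h2, h1, hPtP]
    calc nuclearNorm P = ∑ i, Real.sqrt (mu i) := rfl
      _ = ∑ i, mu i := Finset.sum_congr rfl fun i _ => hsqrt i
      _ = P.trace := hsum
  have hnnPr : nuclearNorm P = (L.rank : ℝ) := by rw [hnnP, htr, hrank]
  refine ⟨hLP, hnnPr, ?_⟩
  intro Z hLZ hZne
  -- P * Z = P
  have hVtZ : Vᵀ * Z = Vᵀ := by
    have h1 : Uᵀ * L = Matrix.diagonal σ * Vᵀ := by
      rw [hSVD, ← Matrix.mul_assoc, ← Matrix.mul_assoc, hU, Matrix.one_mul]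
    have h2 : Matrix.diagonal σ * (Vᵀ * Z) = Matrix.diagonal σ * Vᵀ := by
      calc Matrix.diagonal σ * (Vᵀ * Z) = Uᵀ * L * Z := by
            rw [h1, Matrix.mul_assoc]
        _ = Uᵀ * L := by rw [Matrix.mul_assoc, hLZ]
        _ = Matrix.diagonal σ * Vᵀ := h1
    have hinv : Matrix.diagonal (fun i => (σ i)⁻¹) * Matrix.diagonal σ = 1 := by
      rw [Matrix.diagonal_mul_diagonal]
      have : (fun i => (σ i)⁻¹ * σ i) = fun _ => (1 : ℝ) := by
        funext i; exact inv_mul_cancel₀ (ne_of_gt (hσ i))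
      rw [this, Matrix.diagonal_one]
    calc Vᵀ * Z = (Matrix.diagonal (fun i => (σ i)⁻¹) * Matrix.diagonal σ) * (Vᵀ * Z) := by
          rw [hinv, Matrix.one_mul]
      _ = Matrix.diagonal (fun i => (σ i)⁻¹) * (Matrix.diagonal σ * (Vᵀ * Z)) :=
          Matrix.mul_assoc _ _ _
      _ = Matrix.diagonal (fun i => (σ i)⁻¹) * (Matrix.diagonal σ * Vᵀ) := by rw [h2]
      _ = (Matrix.diagonal (fun i => (σ i)⁻¹) * Matrix.diagonal σ) * Vᵀ :=
          (Matrix.mul_assoc _ _ _).symm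
      _ = Vᵀ := by rw [hinv, Matrix.one_mul]
  have hPZ : P * Z = P := by
    rw [hPdef, Matrix.mul_assoc, hVtZ]
  obtain ⟨hle, heq⟩ := key P Z hPt hPP hPZ
  rcases lt_or_eq_of_le hle with h | h
  · rw [hnnP]; exact h
  · exact absurd (heq h) hZne
end

section
/- Let P_V and P_Γ be orthogonal projections onto subspaces V and Γ. If ‖(c^{-1} P_V P_Γ P_V − P_V)|_V‖ ≤ 1/2 for some c > 0 (operator norm of the restriction to V), then for every vector x, c‖P_V P_{Γ^⊥} x‖ ≤ 2‖P_{V^⊥} P_{Γ^⊥} x‖, and consequently V ∩ Γ^⊥ = {0}. -/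
/-- If ‖(c⁻¹ P_V P_Γ P_V − P_V)|_V‖ ≤ 1/2 for some c > 0, then for every x,
c‖P_V P_{Γ^⊥} x‖ ≤ 2‖P_{V^⊥} P_{Γ^⊥} x‖, and consequently V ∩ Γ^⊥ = {0}. -/
theorem stmt7 {E : Type*} [NormedAddCommGroup E] [InnerProductSpace ℝ E]
    [FiniteDimensional ℝ E] (V Γ : Submodule ℝ E) (c : ℝ) (hc : 0 < c)
    (h : ‖c⁻¹ • ((Submodule.orthogonalProjectionOnto V).comp
            ((Γ.subtypeL.comp (Submodule.orthogonalProjectionOnto Γ)).comp V.subtypeL))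
          - ContinuousLinearMap.id ℝ V‖ ≤ 1 / 2) :
    (∀ x : E,
      c * ‖(Submodule.orthogonalProjectionOnto V ((Submodule.orthogonalProjectionOnto Γᗮ x : E)) : E)‖
        ≤ 2 * ‖(Submodule.orthogonalProjectionOnto Vᗮ ((Submodule.orthogonalProjectionOnto Γᗮ x : E)) : E)‖) ∧
    V ⊓ Γᗮ = ⊥ := by
  have key : ∀ m : E, m ∈ Γᗮ →
      c * ‖(Submodule.orthogonalProjectionOnto V m : E)‖ ≤ 2 * ‖(Submodule.orthogonalProjectionOnto Vᗮ m : E)‖ := by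
    intro m hm
    set u : V := Submodule.orthogonalProjectionOnto V m with hu
    have h1 := ContinuousLinearMap.le_of_opNorm_le _ h u
    have h2 : ‖c⁻¹ • (Submodule.orthogonalProjectionOnto V ((Submodule.orthogonalProjectionOnto Γ (u : E) : E))) - u‖
        ≤ (1/2) * ‖u‖ := by
      simpa using h1
    -- ‖u‖/2 ≤ c⁻¹ * ‖P_V P_Γ u‖
    have h3 : (1/2) * ‖u‖ ≤ c⁻¹ * ‖(Submodule.orthogonalProjectionOnto V ((Submodule.orthogonalProjectionOnto Γ (u : E) : E)) : V)‖ := by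
      have hns := norm_sub_norm_le u (c⁻¹ • (Submodule.orthogonalProjectionOnto V ((Submodule.orthogonalProjectionOnto Γ (u : E) : E))))
      rw [norm_sub_rev, norm_smul, norm_inv, Real.norm_eq_abs, abs_of_pos hc] at hns
      linarith [h2]
    -- ‖P_V P_Γ u‖ ≤ ‖P_Γ u‖
    have h4 : ‖(Submodule.orthogonalProjectionOnto V ((Submodule.orthogonalProjectionOnto Γ (u : E) : E)) : V)‖
        ≤ ‖((Submodule.orthogonalProjectionOnto Γ (u : E) : E))‖ := by
      simpa using ContinuousLinearMap.le_of_opNorm_le _ (Submodule.orthogonalProjectionOnto_norm_le V)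
        ((Submodule.orthogonalProjectionOnto Γ (u : E) : E))
    -- P_Γ m = 0
    have hPm : Submodule.orthogonalProjectionOnto Γ m = 0 :=
      Submodule.orthogonalProjectionOnto_apply_of_mem_orthogonal hm
    -- (u : E) = m - P_{V^⊥} m
    have hdec : (u : E) = m - (Submodule.orthogonalProjectionOnto Vᗮ m : E) := by
      have hsum := Submodule.starProjection_add_starProjection_orthogonal (K := V) m
      rw [hu]
      exact eq_sub_of_add_eq hsum
    have h5 : ‖((Submodule.orthogonalProjectionOnto Γ (u : E) : E))‖
        ≤ ‖(Submodule.orthogonalProjectionOnto Vᗮ m : E)‖ := by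
      have e1 : Submodule.orthogonalProjectionOnto Γ (u : E)
          = - Submodule.orthogonalProjectionOnto Γ ((Submodule.orthogonalProjectionOnto Vᗮ m : E)) := by
        rw [hdec, map_sub, hPm, zero_sub]
      rw [e1]
      have hle := ContinuousLinearMap.le_of_opNorm_le _ (Submodule.orthogonalProjectionOnto_norm_le Γ)
        ((Submodule.orthogonalProjectionOnto Vᗮ m : E))
      rw [one_mul] at hle
      rw [show ((-(Submodule.orthogonalProjectionOnto Γ ((Submodule.orthogonalProjectionOnto Vᗮ m : E))) : Γ) : E)
          = -((Submodule.orthogonalProjectionOnto Γ ((Submodule.orthogonalProjectionOnto Vᗮ m : E)) : E)) from rfl, norm_neg]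
      exact hle
    have h6 : (1/2) * ‖u‖ ≤ c⁻¹ * ‖(Submodule.orthogonalProjectionOnto Vᗮ m : E)‖ := by
      have hcinv : (0:ℝ) ≤ c⁻¹ := le_of_lt (inv_pos.mpr hc)
      nlinarith [h3, h4, h5]
    have hun : ‖u‖ = ‖(Submodule.orthogonalProjectionOnto V m : E)‖ := by rw [hu]; rfl
    rw [hun] at h6
    have := mul_le_mul_of_nonneg_left h6 (le_of_lt hc)
    rw [← mul_assoc, ← mul_assoc, mul_inv_cancel₀ (ne_of_gt hc)] at this
    linarith
  constructor
  · intro x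
    exact key _ (Submodule.orthogonalProjectionOnto Γᗮ x).2
  · rw [Submodule.eq_bot_iff]
    intro x hx
    obtain ⟨hxV, hxG⟩ := Submodule.mem_inf.mp hx
    have := key x hxG
    rw [show ((Submodule.orthogonalProjectionOnto V x : E)) = x from Submodule.starProjection_eq_self_iff.mpr hxV] at this
    have hperp : Submodule.orthogonalProjectionOnto Vᗮ x = 0 :=
      Submodule.orthogonalProjectionOnto_apply_of_mem_orthogonal
        (Submodule.le_orthogonal_orthogonal V hxV)
    rw [hperp] at this
    simp only [ZeroMemClass.coe_zero, norm_zero, mul_zero] at this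
    have hx0 : ‖x‖ = 0 := by nlinarith [norm_nonneg x]
    exact norm_eq_zero.mp hx0
end

section
/- Scalar Bernstein tail bound for Bernoulli sampling of a matrix entry functional: let Z ∈ R^{m×n} be fixed, {ω_{ij}} an orthonormal basis of R^{m×n}, δ_{ij} i.i.d. Bernoulli(p), and define Y = Σ_{ij} (1 − p^{-1}δ_{ij}) ⟨Z, ω_{ij}⟩ ⟨P ω_{ij}, ω_{ab}⟩ where P is an orthogonal projection with max_{ij} ‖P ω_{ij}‖_F² ≤ τ. Then E[Y] = 0, each summand is bounded in absolute value by (2τ/p)·max_{ij}|⟨Z,ω_{ij}⟩| (assuming p ≤ 1/2), and the total variance satisfies Σ E[summand²] ≤ (τ/p)·max_{ij}⟨Z,ω_{ij}⟩². -/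
open MeasureTheory ProbabilityTheory

def finner {m n : ℕ} (A B : Matrix (Fin m) (Fin n) ℝ) : ℝ := ∑ i, ∑ j, A i j * B i j

noncomputable def frobSq {m n : ℕ} (A : Matrix (Fin m) (Fin n) ℝ) : ℝ :=
  ∑ i, ∑ j, (A i j)^2


lemma finner_eq_sum {m n : ℕ} (A B : Matrix (Fin m) (Fin n) ℝ) :
    finner A B = ∑ q : Fin m × Fin n, A q.1 q.2 * B q.1 q.2 := by
  rw [finner, Fintype.sum_prod_type]

lemma frobSq_eq_finner {m n : ℕ} (A : Matrix (Fin m) (Fin n) ℝ) :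
    frobSq A = finner A A := by
  simp [frobSq, finner, sq]

lemma finner_comm {m n : ℕ} (A B : Matrix (Fin m) (Fin n) ℝ) :
    finner A B = finner B A := by
  simp [finner, mul_comm]

lemma finner_self_nonneg {m n : ℕ} (A : Matrix (Fin m) (Fin n) ℝ) :
    0 ≤ finner A A := by
  apply Finset.sum_nonneg; intro i _
  apply Finset.sum_nonneg; intro j _
  exact mul_self_nonneg _

lemma finner_sub_left {m n : ℕ} (A B C : Matrix (Fin m) (Fin n) ℝ) :
    finner (A - B) C = finner A C - finner B C := by
  simp [finner, sub_mul, Finset.sum_sub_distrib]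

lemma finner_sub_right {m n : ℕ} (A B C : Matrix (Fin m) (Fin n) ℝ) :
    finner A (B - C) = finner A B - finner A C := by
  simp [finner, mul_sub, Finset.sum_sub_distrib]

lemma finner_smul_right {m n : ℕ} (c : ℝ) (A B : Matrix (Fin m) (Fin n) ℝ) :
    finner A (c • B) = c * finner A B := by
  simp only [finner, Matrix.smul_apply, smul_eq_mul, Finset.mul_sum]
  congr 1; ext i; congr 1; ext j; ring

lemma finner_sum_right {m n : ℕ} {ι : Type*} (s : Finset ι) (A : Matrix (Fin m) (Fin n) ℝ)
    (f : ι → Matrix (Fin m) (Fin n) ℝ) :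
    finner A (∑ i ∈ s, f i) = ∑ i ∈ s, finner A (f i) := by
  simp only [finner_eq_sum]
  rw [Finset.sum_comm]
  congr 1; ext q
  simp only [Finset.sum_apply, Matrix.sum_apply, Finset.mul_sum]

lemma finner_cs_sq {m n : ℕ} (A B : Matrix (Fin m) (Fin n) ℝ) :
    (finner A B)^2 ≤ frobSq A * frobSq B := by
  rw [finner_eq_sum]
  have h := Finset.sum_mul_sq_le_sq_mul_sq Finset.univ (fun q : Fin m × Fin n => A q.1 q.2)
    (fun q => B q.1 q.2)
  calc (∑ q : Fin m × Fin n, A q.1 q.2 * B q.1 q.2)^2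
      ≤ (∑ q : Fin m × Fin n, (A q.1 q.2)^2) * ∑ q : Fin m × Fin n, (B q.1 q.2)^2 := h
    _ = frobSq A * frobSq B := by simp [frobSq, Fintype.sum_prod_type]

lemma bessel {m n : ℕ} (ω : Fin m × Fin n → Matrix (Fin m) (Fin n) ℝ)
    (hortho : ∀ q q' : Fin m × Fin n, finner (ω q) (ω q') = if q = q' then 1 else 0)
    (A : Matrix (Fin m) (Fin n) ℝ) :
    ∑ q : Fin m × Fin n, (finner A (ω q))^2 ≤ frobSq A := by
  set a : Fin m × Fin n → ℝ := fun q => finner A (ω q) with ha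
  set S : Matrix (Fin m) (Fin n) ℝ := ∑ q : Fin m × Fin n, a q • ω q with hS
  have hAS : finner A S = ∑ q : Fin m × Fin n, (a q)^2 := by
    rw [hS, finner_sum_right]
    congr 1; ext q
    rw [finner_smul_right, sq]
  have hSS : finner S S = ∑ q : Fin m × Fin n, (a q)^2 := by
    rw [hS, finner_sum_right]
    have : ∀ q : Fin m × Fin n, finner (∑ q' : Fin m × Fin n, a q' • ω q') (a q • ω q) = (a q)^2 := by
      intro q
      rw [finner_comm, finner_sum_right]
      rw [Finset.sum_eq_single q]
      · rw [finner_smul_right, finner_comm, finner_smul_right, hortho, if_pos rfl]; ring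
      · intro q' _ hq'
        rw [finner_smul_right, finner_comm, finner_smul_right, hortho, if_neg hq']; ring
      · simp
    simp only [this]
  have key : finner (A - S) (A - S) = finner A A - ∑ q : Fin m × Fin n, (a q)^2 := by
    rw [finner_sub_left, finner_sub_right, finner_sub_right, hAS, hSS,
      finner_comm S A, hAS]
    ring
  have h0 := finner_self_nonneg (A - S)
  rw [key] at h0
  rw [frobSq_eq_finner]
  linarith

/-- Bernstein data for Y = Σ_{ij}(1 − p⁻¹δ_{ij})⟨Z,ω_{ij}⟩⟨Pω_{ij},ω_{ab}⟩ with
δ_{ij} i.i.d. Bernoulli(p), {ω_{ij}} an orthonormal basis and P an orthogonal projection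
with max ‖Pω_{ij}‖_F² ≤ τ: E[Y] = 0, each summand is bounded by (2τ/p)·max|⟨Z,ω_{ij}⟩|
(when p ≤ 1/2), and Σ E[summand²] ≤ (τ/p)·max⟨Z,ω_{ij}⟩². -/
theorem stmt13 {ΩS : Type*} [MeasurableSpace ΩS] (μ : Measure ΩS)
    [IsProbabilityMeasure μ] {m n : ℕ} (hm : 0 < m) (hn : 0 < n)
    (p τ : ℝ) (hp : 0 < p) (hp2 : p ≤ 1 / 2) (hτ : 0 < τ)
    (Z : Matrix (Fin m) (Fin n) ℝ)
    (ω : Fin m × Fin n → Matrix (Fin m) (Fin n) ℝ)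
    (hortho : ∀ q q' : Fin m × Fin n, finner (ω q) (ω q') = if q = q' then 1 else 0)
    (hbasis : Submodule.span ℝ (Set.range ω) = ⊤)
    (P : Matrix (Fin m) (Fin n) ℝ →ₗ[ℝ] Matrix (Fin m) (Fin n) ℝ)
    (hPidem : ∀ A, P (P A) = P A)
    (hPsym : ∀ A B, finner (P A) B = finner A (P B))
    (hPτ : ∀ q, frobSq (P (ω q)) ≤ τ)
    (ab : Fin m × Fin n)
    (δ : (Fin m × Fin n) → ΩS → ℝ)
    (hmeas : ∀ q, Measurable (δ q))
    (h01 : ∀ q ω', δ q ω' = 0 ∨ δ q ω' = 1)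
    (hmean : ∀ q, ∫ ω', δ q ω' ∂μ = p)
    (hindep : iIndepFun δ μ) :
    (∫ ω', ∑ q, (1 - p⁻¹ * δ q ω') * (finner Z (ω q) * finner (P (ω q)) (ω ab)) ∂μ = 0) ∧
    (∀ q ω', |(1 - p⁻¹ * δ q ω') * (finner Z (ω q) * finner (P (ω q)) (ω ab))|
        ≤ (2 * τ / p) * ⨆ q' : Fin m × Fin n, |finner Z (ω q')|) ∧
    (∑ q, ∫ ω', ((1 - p⁻¹ * δ q ω') * (finner Z (ω q) * finner (P (ω q)) (ω ab)))^2 ∂μ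
        ≤ (τ / p) * (⨆ q' : Fin m × Fin n, |finner Z (ω q')|)^2) := by
  haveI : Nonempty (Fin m) := ⟨⟨0, hm⟩⟩
  haveI : Nonempty (Fin n) := ⟨⟨0, hn⟩⟩
  have hp' : p ≠ 0 := ne_of_gt hp
  set M : ℝ := ⨆ q' : Fin m × Fin n, |finner Z (ω q')| with hM
  have hbdd : BddAbove (Set.range fun q' : Fin m × Fin n => |finner Z (ω q')|) :=
    Set.Finite.bddAbove (Set.finite_range _)
  have hMle : ∀ q, |finner Z (ω q)| ≤ M := fun q => le_ciSup hbdd q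
  have hM0 : 0 ≤ M :=
    le_trans (abs_nonneg _) (hMle (Classical.arbitrary _))
  -- bound on the projection factor
  have hPq : ∀ q, finner (P (ω q)) (ω ab) = finner (P (ω q)) (P (ω ab)) := by
    intro q
    rw [hPsym, ← hPidem (ω ab), ← hPsym, hPidem]
  have hPbound : ∀ q, |finner (P (ω q)) (ω ab)| ≤ τ := by
    intro q
    have hsq : (finner (P (ω q)) (ω ab))^2 ≤ τ^2 := by
      rw [hPq q]
      calc (finner (P (ω q)) (P (ω ab)))^2 ≤ frobSq (P (ω q)) * frobSq (P (ω ab)) :=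
            finner_cs_sq _ _
        _ ≤ τ^2 := by
            have h1 := hPτ q
            have h2 := hPτ ab
            have h3 : 0 ≤ frobSq (P (ω q)) := by
              rw [frobSq_eq_finner]; exact finner_self_nonneg _
            have h4 : 0 ≤ frobSq (P (ω ab)) := by
              rw [frobSq_eq_finner]; exact finner_self_nonneg _
            nlinarith
    nlinarith [abs_nonneg (finner (P (ω q)) (ω ab)), sq_abs (finner (P (ω q)) (ω ab))]
  have hIntδ : ∀ q, Integrable (δ q) μ := by
    intro q
    refine ⟨(hmeas q).aestronglyMeasurable,
      HasFiniteIntegral.of_bounded (C := 1) (ae_of_all _ ?_)⟩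
    intro ω'
    rcases h01 q ω' with h | h <;> simp [h]
  have hInt1 : ∀ q, Integrable (fun ω' => 1 - p⁻¹ * δ q ω') μ :=
    fun q => (integrable_const 1).sub ((hIntδ q).const_mul p⁻¹)
  refine ⟨?_, ?_, ?_⟩
  · -- mean zero
    rw [integral_finset_sum _ (fun q _ => (hInt1 q).mul_const _)]
    refine Finset.sum_eq_zero fun q _ => ?_
    rw [integral_mul_const, integral_sub (integrable_const 1) ((hIntδ q).const_mul p⁻¹),
      integral_const, integral_const_mul, hmean q]
    simp [inv_mul_cancel₀ hp']
  · -- summand bound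
    intro q ω'
    rw [abs_mul]
    have hδb : |1 - p⁻¹ * δ q ω'| ≤ p⁻¹ := by
      have hpinv : (2:ℝ) ≤ p⁻¹ := by
        rw [le_inv_comm₀ (by norm_num) hp]; linarith
      rcases h01 q ω' with h | h <;> rw [h]
      · rw [mul_zero, sub_zero, abs_one]; linarith
      · rw [mul_one, abs_sub_comm, abs_of_nonneg (by linarith)]; linarith
    have hcb : |finner Z (ω q) * finner (P (ω q)) (ω ab)| ≤ M * τ := by
      rw [abs_mul]
      exact mul_le_mul (hMle q) (hPbound q) (abs_nonneg _) hM0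
    calc |1 - p⁻¹ * δ q ω'| * |finner Z (ω q) * finner (P (ω q)) (ω ab)|
        ≤ p⁻¹ * (M * τ) := mul_le_mul hδb hcb (abs_nonneg _) (by positivity)
      _ ≤ (2 * τ / p) * M := by
          rw [div_eq_mul_inv]
          have : 0 ≤ τ * M * p⁻¹ := by positivity
          nlinarith
  · -- variance bound
    have h3 : ∀ q, ∫ ω', ((1 - p⁻¹ * δ q ω') * (finner Z (ω q) * finner (P (ω q)) (ω ab)))^2 ∂μ
        = (p⁻¹ - 1) * (finner Z (ω q) * finner (P (ω q)) (ω ab))^2 := by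
      intro q
      have heq : ∀ ω', ((1 - p⁻¹ * δ q ω') * (finner Z (ω q) * finner (P (ω q)) (ω ab)))^2
          = (1 - (2 * p⁻¹ - p⁻¹^2) * δ q ω') * (finner Z (ω q) * finner (P (ω q)) (ω ab))^2 := by
        intro ω'
        rcases h01 q ω' with h | h <;> rw [h] <;> ring
      simp_rw [heq]
      rw [integral_mul_const, integral_sub (integrable_const 1) ((hIntδ q).const_mul _),
        integral_const, integral_const_mul, hmean q]
      have : (1:ℝ) - (2 * p⁻¹ - p⁻¹^2) * p = p⁻¹ - 1 := by field_simp; ring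
      simp only [measure_univ, ENNReal.toReal_one, smul_eq_mul, one_mul, probReal_univ, mul_one]
      rw [this]
    simp_rw [h3]
    have hsum : ∑ q : Fin m × Fin n, (finner Z (ω q) * finner (P (ω q)) (ω ab))^2
        ≤ M^2 * τ := by
      have hb : ∑ q : Fin m × Fin n, (finner (P (ω ab)) (ω q))^2 ≤ τ :=
        le_trans (bessel ω hortho (P (ω ab))) (hPτ ab)
      calc ∑ q : Fin m × Fin n, (finner Z (ω q) * finner (P (ω q)) (ω ab))^2
          ≤ ∑ q : Fin m × Fin n, M^2 * (finner (P (ω ab)) (ω q))^2 := by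
            refine Finset.sum_le_sum fun q _ => ?_
            have : finner (P (ω q)) (ω ab) = finner (P (ω ab)) (ω q) := by
              rw [hPsym, finner_comm]
            rw [this, mul_pow]
            have h1 : (finner Z (ω q))^2 ≤ M^2 := by
              nlinarith [hMle q, sq_abs (finner Z (ω q)), abs_nonneg (finner Z (ω q))]
            nlinarith [sq_nonneg (finner (P (ω ab)) (ω q))]
        _ = M^2 * ∑ q : Fin m × Fin n, (finner (P (ω ab)) (ω q))^2 := by
            rw [Finset.mul_sum]
        _ ≤ M^2 * τ := by nlinarith [sq_nonneg M]
    rw [← Finset.mul_sum]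
    have hpos : 0 ≤ p⁻¹ - 1 := by
      have : (1:ℝ) ≤ p⁻¹ := by
        rw [le_inv_comm₀ (by norm_num) hp]; linarith
      linarith
    calc (p⁻¹ - 1) * ∑ q : Fin m × Fin n, (finner Z (ω q) * finner (P (ω q)) (ω ab))^2
        ≤ (p⁻¹ - 1) * (M^2 * τ) := by
          refine mul_le_mul_of_nonneg_left hsum hpos
      _ ≤ (τ / p) * M^2 := by
          rw [div_eq_mul_inv]
          nlinarith [sq_nonneg M, mul_nonneg (sq_nonneg M) (le_of_lt hτ)]
end
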